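/- arXiv:2505.13285 — 2 statements merged into one kernel-verified Lean document; each statement's English description precedes it below -/
import Mathlib

section
/- Let K₁ ⊆ ℂ be a connected compact set with 1 ∈ K₁, −1 ∈ K₁, diameter d(K₁) = 2, and minimal width w = w(K₁) < 3/7. For every integer m ≥ 100, the polynomial p_m(z) = (z² − 1)^m satisfies ‖p_m'‖ ≤ √3 · max{w·n, 2·√n} · ‖p_m‖, where n = 2m and ‖f‖ = sup_{z∈K₁} |f(z)|. -/
/-!
Write `z = x + iy`. Since `±1 ∈ K₁` and `diam K₁ = 2`, `K₁` lies in the strip `|x| ≤ 1`. In a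
unit direction `u` the width of `K₁` is at least `2 |Re u|` (from `±1`) and at least
`|Im u · y|` for every `z ∈ K₁`; so a minimal width `w < 3/7` forces `(187/196) y² ≤ w²` on `K₁`.
By connectedness `K₁` meets the imaginary axis, where `|z² - 1| ≥ 1`, so `M := max |z² - 1| ≥ 1`
and `‖p_m‖ = M^m`, while `|p_m'(z)| = 2m |z| |z² - 1|^(m-1)`.
Where `x² ≤ (365/196) y²` we get `|z|² ≤ 3 (187/196) y² ≤ 3 w²`, hence `|p_m'(z)| ≤ √3 w n M^m`.
Elsewhere `|z² - 1|² ≤ 1 - d` with `d` not too small compared to `|z|²`, and a Bernoulli estimate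
of `(1 + d)^(m-1)` gives `m |z|² |z² - 1|^(2(m-1)) ≤ 6`, i.e. `|p_m'(z)| ≤ 2 √(6m) = √3 · 2 √n`.
-/

open Polynomial

/-- The sup-norm of a polynomial over a set `K ⊆ ℂ`. -/
noncomputable def polyNorm (K : Set ℂ) (P : Polynomial ℂ) : ℝ :=
  sSup ((fun z => ‖P.eval z‖) '' K)

/-- The Tur\'an type inverse Markov factor
`M_n(K) = inf { ‖P'‖_K / ‖P‖_K : P of exact degree n with all zeros in K }`. -/
noncomputable def invMarkov (n : ℕ) (K : Set ℂ) : ℝ :=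
  sInf { r : ℝ | ∃ P : Polynomial ℂ, P ≠ 0 ∧ P.natDegree = n ∧
    (∀ z : ℂ, P.IsRoot z → z ∈ K) ∧
    r = polyNorm K (Polynomial.derivative P) / polyNorm K P }

/-- The minimal width of a set `K ⊆ ℂ`: the infimum over unit directions `u` of the
width of `K` in direction `u`. -/
noncomputable def minWidth (K : Set ℂ) : ℝ :=
  sInf { r : ℝ | ∃ u : ℂ, ‖u‖ = 1 ∧
    r = sSup ((fun z => ((starRingEnd ℂ) u * z).re) '' K)
      - sInf ((fun z => ((starRingEnd ℂ) u * z).re) '' K) }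

lemma le_polyNorm {K : Set ℂ} (hK : IsCompact K) (P : ℂ[X]) {z : ℂ} (hz : z ∈ K) :
    ‖P.eval z‖ ≤ polyNorm K P :=
  le_csSup (hK.image P.continuous.norm).bddAbove ⟨z, hz, rfl⟩

lemma polyNorm_le {K : Set ℂ} (hK : K.Nonempty) {P : ℂ[X]} {c : ℝ}
    (h : ∀ z ∈ K, ‖P.eval z‖ ≤ c) : polyNorm K P ≤ c :=
  csSup_le (hK.image _) (by rintro _ ⟨z, hz, rfl⟩; exact h z hz)

lemma abs_re_le_one_of_diam_le {K : Set ℂ} (hK : Bornology.IsBounded K) (hd : Metric.diam K ≤ 2)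
    (h1 : (1 : ℂ) ∈ K) (hm1 : (-1 : ℂ) ∈ K) {z : ℂ} (hz : z ∈ K) : |z.re| ≤ 1 := by
  have hz1 : ‖z - 1‖ ≤ 2 := (dist_eq_norm z 1 ▸ Metric.dist_le_diam_of_mem hK hz h1).trans hd
  have hz2 : ‖z - -1‖ ≤ 2 := (dist_eq_norm z (-1) ▸ Metric.dist_le_diam_of_mem hK hz hm1).trans hd
  have hr1 := (Complex.abs_re_le_norm _).trans hz1
  have hr2 := (Complex.abs_re_le_norm _).trans hz2
  simp only [Complex.sub_re, Complex.one_re, Complex.neg_re, abs_le] at hr1 hr2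
  exact abs_le.2 ⟨by linarith, by linarith⟩

section Width

variable {K : Set ℂ}

noncomputable def width (K : Set ℂ) (u : ℂ) : ℝ :=
  sSup ((fun z => ((starRingEnd ℂ) u * z).re) '' K)
    - sInf ((fun z => ((starRingEnd ℂ) u * z).re) '' K)

lemma le_minWidth {c : ℝ} (h : ∀ u : ℂ, ‖u‖ = 1 → c ≤ width K u) : c ≤ minWidth K :=
  le_csInf ⟨_, 1, norm_one, rfl⟩ (by rintro _ ⟨u, hu, rfl⟩; exact h u hu)

lemma width_nonneg (hK : IsCompact K) (hne : K.Nonempty) (u : ℂ) : 0 ≤ width K u := by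
  have hφ : IsCompact ((fun z => ((starRingEnd ℂ) u * z).re) '' K) :=
    hK.image (by fun_prop)
  exact sub_nonneg.2 (csInf_le_csSup (hne.image _) hφ.bddBelow hφ.bddAbove)

lemma four_mul_sq_im_le_sq_width (hK : IsCompact K) (h1 : (1 : ℂ) ∈ K) (hm1 : (-1 : ℂ) ∈ K)
    (hstrip : ∀ z ∈ K, |z.re| ≤ 1) {u : ℂ} (hu : ‖u‖ = 1) {z : ℂ} (hz : z ∈ K) :
    4 * z.im ^ 2 ≤ width K u ^ 2 * (4 + z.im ^ 2) := by
  set φ : ℂ → ℝ := fun z => ((starRingEnd ℂ) u * z).re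
  have hφ : ∀ z, φ z = u.re * z.re + u.im * z.im := fun z => by simp [φ, Complex.mul_re]
  have hφK : IsCompact (φ '' K) := hK.image (by fun_prop)
  have hS : ∀ z ∈ K, φ z ≤ sSup (φ '' K) := fun z hz => le_csSup hφK.bddAbove ⟨z, hz, rfl⟩
  have hI : ∀ z ∈ K, sInf (φ '' K) ≤ φ z := fun z hz => csInf_le hφK.bddBelow ⟨z, hz, rfl⟩
  have hw : width K u = sSup (φ '' K) - sInf (φ '' K) := rfl
  have hab : u.re ^ 2 + u.im ^ 2 = 1 := by
    have h := Complex.sq_norm u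
    rw [hu, Complex.normSq_apply] at h
    linarith
  -- `φ (±1) = ±u.re`, and `u.re * z.re` lies between them since `|z.re| ≤ 1`
  have hS1 := hS 1 h1
  have hSm1 := hS (-1) hm1
  have hI1 := hI 1 h1
  have hIm1 := hI (-1) hm1
  have hSz := hS z hz
  have hIz := hI z hz
  simp only [hφ, Complex.one_re, Complex.one_im, Complex.neg_re, Complex.neg_im] at *
  have hre : |u.re * z.re| ≤ |u.re| := by
    rw [abs_mul]; exact mul_le_of_le_one_right (abs_nonneg _) (hstrip z hz)
  have h2a : 2 * |u.re| ≤ width K u := by rw [hw]; cases abs_cases u.re <;> linarith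
  have hby : |u.im * z.im| ≤ width K u := by
    rw [hw, abs_le]; constructor <;> cases abs_le.1 hre <;> cases abs_cases u.re <;> linarith
  have ha2 : 4 * u.re ^ 2 ≤ width K u ^ 2 := by nlinarith [abs_nonneg u.re, sq_abs u.re]
  have hb2 : u.im ^ 2 * z.im ^ 2 ≤ width K u ^ 2 := by
    rw [← mul_pow, ← sq_abs]; exact pow_le_pow_left₀ (abs_nonneg _) hby 2
  nlinarith [mul_le_mul_of_nonneg_right ha2 (sq_nonneg z.im)]

lemma four_mul_sq_im_le_sq_minWidth (hK : IsCompact K) (h1 : (1 : ℂ) ∈ K) (hm1 : (-1 : ℂ) ∈ K)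
    (hstrip : ∀ z ∈ K, |z.re| ≤ 1) {z : ℂ} (hz : z ∈ K) :
    0 ≤ minWidth K ∧ 4 * z.im ^ 2 ≤ minWidth K ^ 2 * (4 + z.im ^ 2) := by
  have hpos : 0 < 4 + z.im ^ 2 := by positivity
  have h : √(4 * z.im ^ 2 / (4 + z.im ^ 2)) ≤ minWidth K := le_minWidth fun u hu => by
    rw [Real.sqrt_le_left (width_nonneg hK ⟨z, hz⟩ u), div_le_iff₀ hpos]
    exact four_mul_sq_im_le_sq_width hK h1 hm1 hstrip hu hz
  obtain ⟨h0, h⟩ := Real.sqrt_le_iff.1 h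
  exact ⟨h0, (div_le_iff₀ hpos).1 h⟩

end Width

lemma sq_norm_sq_sub_one (z : ℂ) :
    ‖z ^ 2 - 1‖ ^ 2 = (1 - z.re ^ 2) ^ 2 + 2 * z.im ^ 2 * (1 + z.re ^ 2) + (z.im ^ 2) ^ 2 := by
  rw [Complex.sq_norm, Complex.normSq_apply]
  simp only [pow_two, Complex.sub_re, Complex.sub_im, Complex.mul_re, Complex.mul_im,
    Complex.one_re, Complex.one_im]
  ring

lemma exists_one_le_norm_sq_sub_one {K : Set ℂ} (hK : IsPreconnected K) (h1 : (1 : ℂ) ∈ K)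
    (hm1 : (-1 : ℂ) ∈ K) : ∃ z ∈ K, 1 ≤ ‖z ^ 2 - 1‖ := by
  obtain ⟨z, hz, hre⟩ := hK.intermediate_value hm1 h1 Complex.continuous_re.continuousOn
    (show (0 : ℝ) ∈ Set.Icc (-1 : ℂ).re (1 : ℂ).re by norm_num)
  have h := sq_norm_sq_sub_one z
  rw [hre] at h
  exact ⟨z, hz, by nlinarith [norm_nonneg (z ^ 2 - 1), sq_nonneg z.im]⟩

lemma norm_eval_sq_sub_one_pow (m : ℕ) (z : ℂ) :
    ‖((X ^ 2 - 1 : ℂ[X]) ^ m).eval z‖ = ‖z ^ 2 - 1‖ ^ m := by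
  simp

lemma norm_eval_derivative_sq_sub_one_pow (m : ℕ) (z : ℂ) :
    ‖(derivative ((X ^ 2 - 1 : ℂ[X]) ^ m)).eval z‖ = 2 * m * ‖z‖ * ‖z ^ 2 - 1‖ ^ (m - 1) := by
  simp only [derivative_pow, map_natCast, derivative_sub, Nat.cast_ofNat, Nat.add_one_sub_one,
    pow_one, derivative_X, mul_one, derivative_one, sub_zero, eval_mul, eval_natCast, eval_pow,
    eval_sub, eval_X, eval_one, eval_C, Complex.norm_mul, RCLike.norm_natCast, norm_pow,
    Complex.norm_ofNat]
  ring

-- `(1 + d) ^ k` outgrows `(k + 1) * A`, and `(1 + d) * s ≤ 1 - d ^ 2 ≤ 1`.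
lemma mul_pow_le_of_one_add_pow {n k : ℕ} (hnk : n ≤ k) {A C d s : ℝ} (hd : 0 ≤ d)
    (hs0 : 0 ≤ s) (hs : s ≤ 1 - d) (hC : 0 ≤ C)
    (hstart : (n + 1) * A ≤ C * (1 + d) ^ n) (hslope : A ≤ C * d * (1 + d) ^ n) :
    (k + 1) * A * s ^ k ≤ C := by
  have hgrowth : (k + 1) * A ≤ C * (1 + d) ^ k := by
    obtain ⟨j, rfl⟩ := Nat.exists_eq_add_of_le hnk
    have hbern : 1 + j * d ≤ (1 + d) ^ j := one_add_mul_le_pow (by linarith) j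
    calc ((n + j : ℕ) + 1) * A = (n + 1) * A + j * A := by push_cast; ring
      _ ≤ C * (1 + d) ^ n + j * (C * d * (1 + d) ^ n) :=
          add_le_add hstart (mul_le_mul_of_nonneg_left hslope j.cast_nonneg)
      _ = C * (1 + d) ^ n * (1 + j * d) := by ring
      _ ≤ C * (1 + d) ^ n * (1 + d) ^ j := mul_le_mul_of_nonneg_left hbern (by positivity)
      _ = C * (1 + d) ^ (n + j) := by ring
  calc (k + 1) * A * s ^ k ≤ C * (1 + d) ^ k * (1 - d) ^ k :=
        mul_le_mul hgrowth (pow_le_pow_left₀ hs0 hs k) (by positivity) (by positivity)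
    _ = C * (1 - d ^ 2) ^ k := by rw [mul_assoc, ← mul_pow]; ring
    _ ≤ C := mul_le_of_le_one_right hC (pow_le_one₀ (by nlinarith) (by nlinarith))

lemma one_sub_sq_add_mul_add_sq_mono {t u u' : ℝ} (ht : 0 ≤ t) (hu : 0 ≤ u) (huu' : u ≤ u') :
    (1 - t) ^ 2 + 2 * u * (1 + t) + u ^ 2 ≤ (1 - t) ^ 2 + 2 * u' * (1 + t) + u' ^ 2 := by
  nlinarith

section Numerics

-- `t = (re z) ^ 2` and `u = (im z) ^ 2`, so the base `(1 - t) ^ 2 + 2 * u * (1 + t) + u ^ 2` is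
-- `‖z ^ 2 - 1‖ ^ 2` (see `sq_norm_sq_sub_one`).
variable {k : ℕ} {t u : ℝ}

lemma mul_pow_le_six_of_le_27_hundredths (hk : 99 ≤ k) (hu : 0 ≤ u) (hut : 365 / 196 * u ≤ t)
    (ht : t ≤ 27 / 100) :
    (k + 1) * (t + u) * ((1 - t) ^ 2 + 2 * u * (1 + t) + u ^ 2) ^ k ≤ 6 := by
  have ht0 : 0 ≤ t := le_trans (by positivity) hut
  have hs0 : 0 ≤ (1 - t) ^ 2 + 2 * u * (1 + t) + u ^ 2 := by positivity
  have htu : t + u ≤ 561 / 365 * t := by linarith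
  -- the base at `u = 196 / 365 * t`, with `314721 / 133225 = (1 + 196 / 365) ^ 2`
  have hs : (1 - t) ^ 2 + 2 * u * (1 + t) + u ^ 2
      ≤ 1 - t * (338 / 365 - 314721 / 133225 * t) :=
    (one_sub_sq_add_mul_add_sq_mono ht0 hu (show u ≤ 196 / 365 * t by linarith)).trans
      (le_of_eq (by ring))
  have hd : 0 ≤ t * (338 / 365 - 314721 / 133225 * t) := mul_nonneg ht0 (by linarith)
  have hstart : 100 * (561 / 365 * t) ≤ 6 * (1 + 99 * (t * (338 / 365 - 314721 / 133225 * t))) := by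
    nlinarith [mul_nonneg ht0 (sub_nonneg.2 ht)]
  have hslope : 561 / 365 * t ≤ 6 * (t * (338 / 365 - 314721 / 133225 * t)) := by nlinarith
  generalize t * (338 / 365 - 314721 / 133225 * t) = d at *
  have hbern : 1 + 99 * d ≤ (1 + d) ^ 99 := one_add_mul_le_pow (by linarith) 99
  have hone : 1 ≤ (1 + d) ^ 99 := one_le_pow₀ (by linarith)
  refine mul_pow_le_of_one_add_pow hk hd hs0 hs (by norm_num) ?_ ?_
  · push_cast; linarith
  · nlinarith [mul_le_mul_of_nonneg_left hone hd]

lemma mul_pow_le_six_of_le_two_fifths (hk : 99 ≤ k) (hu : 0 ≤ u) (hut : 365 / 196 * u ≤ t)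
    (ht : 27 / 100 < t) (ht' : t ≤ 2 / 5) (hu' : u ≤ 36 / 187) :
    (k + 1) * (t + u) * ((1 - t) ^ 2 + 2 * u * (1 + t) + u ^ 2) ^ k ≤ 6 := by
  have ht0 : 0 ≤ t := le_trans (by positivity) hut
  have hs0 : 0 ≤ (1 - t) ^ 2 + 2 * u * (1 + t) + u ^ 2 := by positivity
  have hsc := one_sub_sq_add_mul_add_sq_mono ht0 hu (show u ≤ 196 / 365 * t by linarith)
  have hsU := one_sub_sq_add_mul_add_sq_mono ht0 hu hu'
  refine mul_pow_le_of_one_add_pow (d := 1 / 40) hk (by norm_num) hs0 ?_ (by norm_num) ?_ ?_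
  · rcases le_or_gt t (9 / 25) with htm | htm
    · nlinarith [mul_nonneg (sub_nonneg.2 ht.le) (sub_nonneg.2 htm)]
    · nlinarith [mul_nonneg (sub_nonneg.2 htm.le) (sub_nonneg.2 ht')]
  · norm_num; linarith
  · norm_num; linarith

lemma mul_pow_le_six_of_two_fifths_lt (hk : 99 ≤ k) (hu : 0 ≤ u) (ht : 2 / 5 < t) (ht' : t ≤ 1)
    (hu' : u ≤ 36 / 187) :
    (k + 1) * (t + u) * ((1 - t) ^ 2 + 2 * u * (1 + t) + u ^ 2) ^ k ≤ 6 := by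
  have hs0 : 0 ≤ (1 - t) ^ 2 + 2 * u * (1 + t) + u ^ 2 := by nlinarith
  have hsU := one_sub_sq_add_mul_add_sq_mono (by linarith) hu hu'
  refine mul_pow_le_of_one_add_pow (d := 1 / 20) hk (by norm_num) hs0 ?_ (by norm_num) ?_ ?_
  · nlinarith [mul_nonneg (sub_nonneg.2 ht.le) (sub_nonneg.2 ht')]
  · norm_num; linarith
  · norm_num; linarith

lemma mul_pow_le_six {m : ℕ} (hm : 100 ≤ m) (hu : 0 ≤ u) (hut : 365 / 196 * u ≤ t) (ht : t ≤ 1)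
    (hu' : u ≤ 36 / 187) :
    m * (t + u) * ((1 - t) ^ 2 + 2 * u * (1 + t) + u ^ 2) ^ (m - 1) ≤ 6 := by
  obtain ⟨k, rfl⟩ : ∃ k, m = k + 1 := ⟨m - 1, by omega⟩
  have hk : 99 ≤ k := by omega
  rw [Nat.add_sub_cancel]
  push_cast
  rcases le_or_gt t (27 / 100) with h₁ | h₁
  · exact mul_pow_le_six_of_le_27_hundredths hk hu hut h₁
  rcases le_or_gt t (2 / 5) with h₂ | h₂
  · exact mul_pow_le_six_of_le_two_fifths hk hu hut h₁ h₂ hu'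
  · exact mul_pow_le_six_of_two_fifths_lt hk hu h₂ ht hu'

end Numerics

lemma norm_mul_pow_le_of_wide {m : ℕ} (hm : 100 ≤ m) {z : ℂ} (hx : z.re ^ 2 ≤ 1)
    (hy : z.im ^ 2 ≤ 36 / 187) (hwide : 365 / 196 * z.im ^ 2 ≤ z.re ^ 2) :
    2 * m * ‖z‖ * ‖z ^ 2 - 1‖ ^ (m - 1) ≤ √3 * (2 * √(2 * m)) := by
  have h6 := mul_pow_le_six hm (sq_nonneg z.im) hwide hx hy
  rw [← sq_norm_sq_sub_one, ← pow_mul, mul_comm 2, pow_mul] at h6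
  have hz : ‖z‖ ^ 2 = z.re ^ 2 + z.im ^ 2 := by
    rw [Complex.sq_norm, Complex.normSq_apply]; ring
  have hsq : (m * ‖z‖ * ‖z ^ 2 - 1‖ ^ (m - 1)) ^ 2 ≤ (3 : ℝ) * (2 * m) := by
    calc (m * ‖z‖ * ‖z ^ 2 - 1‖ ^ (m - 1)) ^ 2
        = m * (m * (z.re ^ 2 + z.im ^ 2) * (‖z ^ 2 - 1‖ ^ (m - 1)) ^ 2) := by rw [← hz]; ring
      _ ≤ (m : ℝ) * 6 := mul_le_mul_of_nonneg_left h6 m.cast_nonneg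
      _ = (3 : ℝ) * (2 * m) := by ring
  have := (le_abs_self _).trans (Real.abs_le_sqrt hsq)
  rw [Real.sqrt_mul (by norm_num)] at this
  linarith

lemma norm_le_sqrt_three_mul_of_narrow {z : ℂ} {w : ℝ} (hw : 0 ≤ w)
    (hy : 187 / 196 * z.im ^ 2 ≤ w ^ 2) (hnarrow : z.re ^ 2 ≤ 365 / 196 * z.im ^ 2) :
    ‖z‖ ≤ √3 * w := by
  have hz : ‖z‖ ^ 2 ≤ 3 * w ^ 2 := by
    rw [Complex.sq_norm, Complex.normSq_apply]; nlinarith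
  calc ‖z‖ ≤ √(3 * w ^ 2) := (le_abs_self _).trans (Real.abs_le_sqrt hz)
    _ = √3 * w := by rw [Real.sqrt_mul (by norm_num), Real.sqrt_sq hw]

lemma norm_eval_derivative_sq_sub_one_pow_le {m : ℕ} (hm : 100 ≤ m) {z : ℂ} {w M : ℝ}
    (hw0 : 0 ≤ w) (hw : w ≤ 3 / 7) (hx : z.re ^ 2 ≤ 1) (hy : 4 * z.im ^ 2 ≤ w ^ 2 * (4 + z.im ^ 2))
    (hM : 1 ≤ M) (hzM : ‖z ^ 2 - 1‖ ≤ M) :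
    ‖(derivative ((X ^ 2 - 1 : ℂ[X]) ^ m)).eval z‖ ≤
      √3 * max (w * (2 * m)) (2 * √(2 * m)) * M ^ m := by
  rw [norm_eval_derivative_sq_sub_one_pow]
  have hy' : 187 / 196 * z.im ^ 2 ≤ w ^ 2 := by
    nlinarith [mul_le_mul_of_nonneg_right (show w ^ 2 ≤ 9 / 49 by nlinarith) (sq_nonneg z.im)]
  have hMm : 1 ≤ M ^ m := one_le_pow₀ hM
  rcases le_total (z.re ^ 2) (365 / 196 * z.im ^ 2) with hnarrow | hwide
  · have hpow : ‖z ^ 2 - 1‖ ^ (m - 1) ≤ M ^ m :=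
      (pow_le_pow_left₀ (norm_nonneg _) hzM _).trans (pow_le_pow_right₀ hM (Nat.sub_le m 1))
    calc 2 * m * ‖z‖ * ‖z ^ 2 - 1‖ ^ (m - 1) ≤ 2 * m * (√3 * w) * M ^ m := by
          gcongr; exact norm_le_sqrt_three_mul_of_narrow hw0 hy' hnarrow
      _ = √3 * (w * (2 * m)) * M ^ m := by ring
      _ ≤ _ := by gcongr; exact le_max_left _ _
  · calc 2 * m * ‖z‖ * ‖z ^ 2 - 1‖ ^ (m - 1) ≤ √3 * (2 * √(2 * m)) :=
          norm_mul_pow_le_of_wide hm hx (by nlinarith) hwide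
      _ ≤ √3 * (2 * √(2 * m)) * M ^ m := le_mul_of_one_le_right (by positivity) hMm
      _ ≤ _ := by gcongr; exact le_max_right _ _

theorem stmt_8 (K₁ : Set ℂ) (hK : IsCompact K₁) (hconn : IsConnected K₁)
    (h1 : (1 : ℂ) ∈ K₁) (hm1 : (-1 : ℂ) ∈ K₁) (hd : Metric.diam K₁ = 2)
    (hw : minWidth K₁ < 3 / 7) (m : ℕ) (hm : 100 ≤ m) :
    polyNorm K₁ (Polynomial.derivative (((X : Polynomial ℂ) ^ 2 - 1) ^ m)) ≤
      Real.sqrt 3 * max (minWidth K₁ * (2 * m)) (2 * Real.sqrt (2 * m)) *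
        polyNorm K₁ (((X : Polynomial ℂ) ^ 2 - 1) ^ m) := by
  have hstrip : ∀ z ∈ K₁, |z.re| ≤ 1 := fun z hz =>
    abs_re_le_one_of_diam_le hK.isBounded hd.le h1 hm1 hz
  obtain ⟨z₀, hz₀, hmax⟩ := hK.exists_isMaxOn ⟨1, h1⟩
    (show Continuous fun z : ℂ => ‖z ^ 2 - 1‖ by fun_prop).continuousOn
  obtain ⟨z₁, hz₁, hz₁1⟩ := exists_one_le_norm_sq_sub_one hconn.isPreconnected h1 hm1
  have hM : 1 ≤ ‖z₀ ^ 2 - 1‖ := hz₁1.trans (hmax hz₁)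
  calc polyNorm K₁ (derivative ((X ^ 2 - 1) ^ m))
      ≤ √3 * max (minWidth K₁ * (2 * m)) (2 * √(2 * m)) * ‖z₀ ^ 2 - 1‖ ^ m :=
        polyNorm_le ⟨1, h1⟩ fun z hz =>
          have hzw := four_mul_sq_im_le_sq_minWidth hK h1 hm1 hstrip hz
          norm_eval_derivative_sq_sub_one_pow_le hm hzw.1 hw.le
            (sq_le_one_iff_abs_le_one _ |>.2 (hstrip z hz)) hzw.2 hM (hmax hz)
    _ = √3 * max (minWidth K₁ * (2 * m)) (2 * √(2 * m)) * ‖((X ^ 2 - 1 : ℂ[X]) ^ m).eval z₀‖ := by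
        rw [norm_eval_sq_sub_one_pow]
    _ ≤ _ := by gcongr; exact le_polyNorm hK _ hz₀
end

section
/- Let K₁ ⊆ ℂ be a connected compact set with 1 ∈ K₁ and −1 ∈ K₁. Then for every integer m ≥ 1, sup_{z∈K₁} |z² − 1|^m ≥ 1, i.e. the polynomial p_m(z) = (z² − 1)^m satisfies ‖p_m‖ ≥ 1, where ‖f‖ = sup_{z∈K₁} |f(z)|. -/
open Polynomial

/-! A connected set through `±1` meets the imaginary axis at some `z = i y`, and there
`|z² - 1| = y² + 1 ≥ 1`. -/

lemma IsPreconnected.exists_mem_re_eq {K : Set ℂ} (hK : IsPreconnected K) {a b : ℂ}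
    (ha : a ∈ K) (hb : b ∈ K) {t : ℝ} (ht : t ∈ Set.Icc a.re b.re) :
    ∃ z ∈ K, z.re = t :=
  (hK.image Complex.re Complex.continuous_re.continuousOn).Icc_subset
    (Set.mem_image_of_mem _ ha) (Set.mem_image_of_mem _ hb) ht

lemma Complex.norm_sq_sub_one_of_re_eq_zero {z : ℂ} (hz : z.re = 0) :
    ‖z ^ 2 - 1‖ = z.im ^ 2 + 1 := by
  have hz' : z = (z.im : ℂ) * Complex.I := by
    conv_lhs => rw [← Complex.re_add_im z, hz]
    simp
  rw [hz', mul_pow, Complex.I_sq, mul_neg_one, ← neg_add', norm_neg, ← Complex.ofReal_pow,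
    ← Complex.ofReal_one, ← Complex.ofReal_add, Complex.norm_of_nonneg (by positivity)]
  simp

lemma norm_eval_le_polyNorm {K : Set ℂ} (hK : IsCompact K) (P : Polynomial ℂ) {z : ℂ}
    (hz : z ∈ K) : ‖P.eval z‖ ≤ polyNorm K P :=
  le_csSup ((hK.image (continuous_norm.comp P.continuous)).bddAbove) ⟨z, hz, rfl⟩

theorem stmt_11_general (K₁ : Set ℂ) (hK : IsCompact K₁) (hconn : IsConnected K₁)
    (h1 : (1 : ℂ) ∈ K₁) (hm1 : (-1 : ℂ) ∈ K₁) (m : ℕ) :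
    1 ≤ polyNorm K₁ (((X : Polynomial ℂ) ^ 2 - 1) ^ m) := by
  obtain ⟨z, hzK, hzre⟩ :=
    hconn.isPreconnected.exists_mem_re_eq hm1 h1 (t := 0) ⟨by simp, by simp⟩
  have hz : 1 ≤ ‖z ^ 2 - 1‖ := by
    rw [Complex.norm_sq_sub_one_of_re_eq_zero hzre]
    exact le_add_of_nonneg_left (sq_nonneg _)
  calc 1 ≤ ‖z ^ 2 - 1‖ ^ m := one_le_pow₀ hz
    _ = ‖(((X : Polynomial ℂ) ^ 2 - 1) ^ m).eval z‖ := by simp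
    _ ≤ polyNorm K₁ (((X : Polynomial ℂ) ^ 2 - 1) ^ m) := norm_eval_le_polyNorm hK _ hzK

theorem stmt_11 (K₁ : Set ℂ) (hK : IsCompact K₁) (hconn : IsConnected K₁)
    (h1 : (1 : ℂ) ∈ K₁) (hm1 : (-1 : ℂ) ∈ K₁) (m : ℕ) (hm : 1 ≤ m) :
    1 ≤ polyNorm K₁ (((X : Polynomial ℂ) ^ 2 - 1) ^ m) :=
  stmt_11_general K₁ hK hconn h1 hm1 m
end
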